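/- arXiv:2401.06636 — 2 statements merged into one kernel-verified Lean document; each statement's English description precedes it below -/
import Mathlib

section
/- Let S be a Hausdorff locally compact semitopological semigroup, let z ∈ S satisfy z·s = s·z = z for all s ∈ S, and let f : B_{[0,∞)} → S be an injective semigroup homomorphism with range S \ {z} such that every point of S \ {z} is isolated in S. Then z is an isolated point of S, i.e. {z} is open in S. -/
/-- The underlying set of the semigroup `B_{[0,∞)}`: pairs of non-negative reals. -/
abbrev Bsg := {p : ℝ × ℝ // 0 ≤ p.1 ∧ 0 ≤ p.2}

namespace Bsg

/-- The multiplication `(a,b)·(c,d) = (a+c−min b c, b+d−min b c)`. -/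
def bmul (u v : Bsg) : Bsg :=
  ⟨(u.1.1 + v.1.1 - min u.1.2 v.1.1, u.1.2 + v.1.2 - min u.1.2 v.1.1),
    by
      refine ⟨?_, ?_⟩
      · show (0:ℝ) ≤ u.1.1 + v.1.1 - min u.1.2 v.1.1
        have h := min_le_right u.1.2 v.1.1
        have h1 := u.2.1; have h2 := v.2.1; linarith
      · show (0:ℝ) ≤ u.1.2 + v.1.2 - min u.1.2 v.1.1
        have h := min_le_left u.1.2 v.1.1
        have h1 := u.2.2; have h2 := v.2.2; linarith⟩

instance : Semigroup Bsg where
  mul := bmul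
  mul_assoc := by
    rintro ⟨⟨a,b⟩,ha,hb⟩ ⟨⟨c,d⟩,hc,hd⟩ ⟨⟨e,g⟩,he,hg⟩
    show bmul (bmul _ _) _ = bmul _ (bmul _ _)
    apply Subtype.ext
    rw [Prod.ext_iff]
    constructor <;>
      simp only [bmul, min_def] <;> split_ifs <;> simp_all <;> linarith

/-- The natural partial order on the inverse semigroup `B_{[0,∞)}`:
`s ≼ t` iff `s = t·e` for some idempotent `e`. -/
def ple (s t : Bsg) : Prop := ∃ e : Bsg, e * e = e ∧ s = t * e

/-- `L_α^+ = {(x, x+α) : x ≥ 0}`. -/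
def Lplus (α : ℝ) : Set Bsg := {p | p.1.2 = p.1.1 + α}

/-- `L_α^− = {(x+α, x) : x ≥ 0}`. -/
def Lminus (α : ℝ) : Set Bsg := {p | p.1.1 = p.1.2 + α}

/-- `↓(a,b)`, the down-set of an element w.r.t. the natural partial order. -/
def lowerSet (t : Bsg) : Set Bsg := {s | ple s t}

/-- `↓°(a,b) = ↓(a,b) \ {(a,b)}`. -/
def lowerSetStrict (t : Bsg) : Set Bsg := lowerSet t \ {t}

/-- The inversion `(a,b) ↦ (b,a)`. -/
def binv (u : Bsg) : Bsg := ⟨(u.1.2, u.1.1), u.2.2, u.2.1⟩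

end Bsg

/-!
Suppose `{z}` is not open and let `V` be the interior of a compact neighbourhood `K` of `z`.
As the points of `K \ U` are isolated, `K \ U` is finite for every open `U ∋ z`. Hence
`E = f⁻¹ V` is infinite (otherwise `{z} = V \ f(E)` would be open), while, by separate continuity
and because `z` is a zero, every translation `x ↦ a x b` moves only finitely many points of `E`
out of `E`, and every fibre of a left translation `x ↦ a x` meets `E` in a finite set.

No infinite subset of `B_{[0,∞)}` behaves like this. For `s ∈ [0,1]`, the translation
`x ↦ (s,0)·x·(0,s) = x + (s,s)` moves only finitely many points out of `E`. But for a fixed `x`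
the points `x + (s,s)` are pairwise distinct and all lie in the fibre of `y ↦ (0, x₁+1)·y` over
`(0, x₂+1)`, so only finitely many of them are in `E`. As `[0,1]` is uncountable, some `s`
moves infinitely many points of `E` out of `E`.
-/

open Set Function

theorem IsCompact.finite_of_forall_isOpen_singleton {X : Type*} [TopologicalSpace X] {K : Set X}
    (hK : IsCompact K) (h : ∀ x ∈ K, IsOpen ({x} : Set X)) : K.Finite :=
  hK.finite <| isDiscrete_iff_forall_mem_exists_isOpen.2 fun x hx =>
    ⟨{x}, h x hx, singleton_inter_of_mem hx⟩

section IsolatedZero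

variable {M S : Type*} [Semigroup M] [TopologicalSpace S] [Semigroup S] {z : S} {f : M →ₙ* S}

theorem finite_preimage_diff (hf : Injective f) (hiso : ∀ s, s ≠ z → IsOpen ({s} : Set S))
    {K U : Set S} (hK : IsCompact K) (hU : IsOpen U) (hzU : z ∈ U) : (f ⁻¹' (K \ U)).Finite :=
  ((hK.diff hU).finite_of_forall_isOpen_singleton fun s hs =>
    hiso s fun h => hs.2 (h ▸ hzU)).preimage hf.injOn

theorem infinite_preimage_of_not_isOpen_singleton [T1Space S] (hrange : range f = {z}ᶜ)
    {V : Set S} (hV : IsOpen V) (hzV : z ∈ V) (hz : ¬IsOpen ({z} : Set S)) :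
    (f ⁻¹' V).Infinite := by
  intro hfin
  have hz_eq : ({z} : Set S) = V \ f '' (f ⁻¹' V) := by
    rw [image_preimage_eq_inter_range, hrange, sdiff_self_inter, sdiff_compl,
      inter_eq_right.2 (singleton_subset_iff.2 hzV)]
  exact hz (hz_eq ▸ hV.sdiff (hfin.image f).isClosed)

theorem finite_sep_mul_mul_notMem [SeparatelyContinuousMul S]
    (hzero : ∀ s, z * s = z ∧ s * z = z) (hf : Injective f)
    (hiso : ∀ s, s ≠ z → IsOpen ({s} : Set S)) {K V : Set S} (hK : IsCompact K)
    (hV : IsOpen V) (hzV : z ∈ V) (hVK : V ⊆ K) (a b : M) :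
    {x ∈ f ⁻¹' V | a * x * b ∉ f ⁻¹' V}.Finite := by
  refine (finite_preimage_diff hf hiso hK
    (hV.preimage ((continuous_mul_const (f b)).comp (continuous_const_mul (f a)))) ?_).subset ?_
  · simpa [(hzero _).1, (hzero _).2] using hzV
  · rintro x ⟨hx, hax⟩
    exact ⟨hVK hx, by simpa using hax⟩

theorem finite_sep_mul_eq [T1Space S] [SeparatelyContinuousMul S]
    (hzero : ∀ s, s * z = z) (hf : Injective f) (hrange : range f = {z}ᶜ)
    (hiso : ∀ s, s ≠ z → IsOpen ({s} : Set S)) {K V : Set S} (hK : IsCompact K) (hVK : V ⊆ K)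
    (a c : M) : {x ∈ f ⁻¹' V | a * x = c}.Finite := by
  have hzc : z ≠ f c := fun h => (hrange ▸ mem_range_self c : f c ∈ ({z}ᶜ : Set S)) h.symm
  refine (finite_preimage_diff hf hiso hK ((isOpen_compl_singleton (x := f c)).preimage
    (continuous_const_mul (f a))) ?_).subset ?_
  · simpa [hzero] using hzc
  · rintro x ⟨hx, rfl⟩
    exact ⟨hVK hx, by simp⟩

end IsolatedZero

theorem Set.finite_of_countable_returns {α ι : Type*} [Uncountable ι] {E : Set α}
    (g : ι → α → α) (hescape : ∀ i, {x ∈ E | g i x ∉ E}.Finite)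
    (hreturn : ∀ x ∈ E, {i | g i x ∈ E}.Countable) : E.Finite := by
  by_contra hE
  let e := Set.Infinite.natEmbedding E hE
  have hcount : (⋃ n, {i | g i (e n) ∈ E}).Countable :=
    countable_iUnion fun n => hreturn _ (e n).2
  obtain ⟨i, hi⟩ : ∃ i, i ∉ ⋃ n, {i | g i (e n) ∈ E} := by
    by_contra! h
    exact not_countable_univ (hcount.mono fun i _ => h i)
  refine infinite_range_of_injective (Subtype.val_injective.comp e.injective)
    ((hescape i).subset ?_)
  rintro _ ⟨n, rfl⟩
  exact ⟨(e n).2, fun h => hi (mem_iUnion.2 ⟨n, h⟩)⟩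

instance : Uncountable unitInterval := by
  rw [← not_countable_iff, Set.countable_coe_iff, unitInterval, Cardinal.Real.Icc_countable_iff]
  norm_num

namespace Bsg

lemma coe_mul (u v : Bsg) : ((u * v : Bsg) : ℝ × ℝ) =
    (u.1.1 + v.1.1 - min u.1.2 v.1.1, u.1.2 + v.1.2 - min u.1.2 v.1.1) := rfl

lemma coe_mul_mul_diagonal (s : ℝ) (hs : 0 ≤ s) (x : Bsg) :
    ((⟨(s, 0), hs, le_rfl⟩ * x * ⟨(0, s), le_rfl, hs⟩ : Bsg) : ℝ × ℝ) =
      (x.1.1 + s, x.1.2 + s) := by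
  obtain ⟨⟨a, b⟩, ha, hb⟩ := x
  ext <;> simp [coe_mul, ha, hb, add_comm]

lemma coe_mul_of_fst_le (c : ℝ) (hc : 0 ≤ c) (y : Bsg) (hy : y.1.1 ≤ c) :
    ((⟨(0, c), le_rfl, hc⟩ * y : Bsg) : ℝ × ℝ) = (0, c - y.1.1 + y.1.2) := by
  simp only [coe_mul, min_eq_right hy]
  ext <;> simp only <;> ring

theorem finite_of_finite_escapes_of_finite_fibres {E : Set Bsg}
    (hescape : ∀ a b : Bsg, {x ∈ E | a * x * b ∉ E}.Finite)
    (hfibre : ∀ a c : Bsg, {x ∈ E | a * x = c}.Finite) : E.Finite := by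
  refine E.finite_of_countable_returns
    (fun (s : unitInterval) x => ⟨((s : ℝ), 0), s.2.1, le_rfl⟩ * x * ⟨(0, (s : ℝ)), le_rfl, s.2.1⟩)
    (fun s => hescape _ _) fun x _ => Set.Finite.countable ?_
  have hx₁ : 0 ≤ x.1.1 + 1 := by linarith [x.2.1]
  have hx₂ : 0 ≤ x.1.2 + 1 := by linarith [x.2.2]
  refine ((hfibre ⟨(0, x.1.1 + 1), le_rfl, hx₁⟩ ⟨(0, x.1.2 + 1), le_rfl, hx₂⟩).preimage
    ?_).subset fun s hs => ⟨hs, ?_⟩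
  · intro s _ t _ hst
    have hfst := congrArg (fun y : Bsg => y.1.1) hst
    rw [coe_mul_mul_diagonal s s.2.1 x, coe_mul_mul_diagonal t t.2.1 x] at hfst
    exact Subtype.ext (add_left_cancel hfst)
  · have hdiag := coe_mul_mul_diagonal s s.2.1 x
    apply Subtype.ext
    rw [coe_mul_of_fst_le _ hx₁ _ (by rw [hdiag]; linarith [s.2.2]), hdiag]
    congr 1
    ring

end Bsg

/-- if every point of `S \ {z}` is isolated, then `z` is an isolated point
of `S`. -/
theorem stmt18 {S : Type*} [TopologicalSpace S] [T2Space S] [LocallyCompactSpace S] [Semigroup S]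
    (hsep : ∀ a : S, Continuous (fun x : S => a * x) ∧ Continuous (fun x : S => x * a))
    (z : S) (hz : ∀ s : S, z * s = z ∧ s * z = z)
    (f : Bsg → S) (hinj : Function.Injective f)
    (hhom : ∀ u v : Bsg, f (u * v) = f u * f v)
    (hrange : Set.range f = ({z}ᶜ : Set S))
    (hiso : ∀ s : S, s ≠ z → IsOpen ({s} : Set S)) :
    IsOpen ({z} : Set S) := by
  have : SeparatelyContinuousMul S := ⟨(hsep _).1, (hsep _).2⟩
  let F : Bsg →ₙ* S := ⟨f, hhom⟩
  obtain ⟨K, hK, hKz⟩ := exists_compact_mem_nhds z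
  have hzV : z ∈ interior K := mem_interior_iff_mem_nhds.2 hKz
  by_contra hz_open
  refine infinite_preimage_of_not_isOpen_singleton (f := F) hrange isOpen_interior hzV hz_open
    (Bsg.finite_of_finite_escapes_of_finite_fibres (fun a b => ?_) fun a c => ?_)
  · exact finite_sep_mul_mul_notMem hz hinj hiso hK isOpen_interior hzV interior_subset a b
  · exact finite_sep_mul_eq (fun s => (hz s).2) hinj hrange hiso hK interior_subset a c
end

section
/- Let S be a Hausdorff locally compact semitopological semigroup, let I ⊆ S be a nonempty compact ideal (s·a ∈ I and a·s ∈ I for all s ∈ S, a ∈ I), and let f : B_{[0,∞)} → S be an injective semigroup homomorphism with range S \ I such that every point of S \ I is isolated in S. Then I is an open subset of S. -/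
open Set

theorem Set.Infinite.exists_mem_closure_notMem_of_isOpen_singleton {X : Type*}
    [TopologicalSpace X] {A K D : Set X} (hA : A.Infinite) (hK : IsCompact K) (hAK : A ⊆ K)
    (hD : ∀ x ∈ D, IsOpen ({x} : Set X)) : ∃ z ∈ closure A, z ∉ D := by
  obtain ⟨z, -, hz⟩ := hA.exists_accPt_of_subset_isCompact hK hAK
  refine ⟨z, mem_closure_iff_clusterPt.2 hz.clusterPt, fun hzD => ?_⟩
  obtain ⟨y, ⟨hyz, -⟩, hne⟩ := accPt_iff_nhds.1 hz {z} ((hD z hzD).mem_nhds rfl)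
  exact hne hyz

theorem isOpen_of_finite_preimage {B S : Type*} [TopologicalSpace S] [T1Space S]
    {I N : Set S} {f : B → S} (hN : IsOpen N) (hIN : I ⊆ N) (hrange : range f = Iᶜ)
    (hfin : (f ⁻¹' N).Finite) : IsOpen I := by
  have hI : I = N \ f '' (f ⁻¹' N) := by
    rw [image_preimage_eq_inter_range, hrange, sdiff_self_inter, sdiff_compl,
      inter_eq_right.2 hIN]
  rw [hI]
  exact hN.sdiff (hfin.image f).isClosed

section AccumulatingInIdeal

variable {B S : Type*} [Semigroup B] [Semigroup S] [TopologicalSpace S] {I N : Set S}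
  {f : B → S}

theorem finite_mul_fiber [T1Space S]
    (hacc : ∀ G : Set B, G.Infinite → G ⊆ f ⁻¹' N → ∃ z ∈ closure (f '' G), z ∈ I)
    (hIdeal : ∀ s : S, ∀ a ∈ I, s * a ∈ I ∧ a * s ∈ I)
    (hhom : ∀ u v : B, f (u * v) = f u * f v) (hfI : ∀ u, f u ∉ I) {v : B}
    (hv : Continuous (f v * ·)) (c : B) : {u ∈ f ⁻¹' N | v * u = c}.Finite := by
  by_contra hinf
  obtain ⟨z, hz, hzI⟩ := hacc _ hinf (sep_subset _ _)
  have hvz : f v * z ∈ closure {f c} :=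
    map_mem_closure hv hz (by rintro _ ⟨u, hu, rfl⟩; simp [← hhom, hu.2])
  rw [closure_singleton, mem_singleton_iff] at hvz
  exact hfI c (hvz ▸ (hIdeal _ _ hzI).1)

theorem finite_mul_mul_escape
    (hacc : ∀ G : Set B, G.Infinite → G ⊆ f ⁻¹' N → ∃ z ∈ closure (f '' G), z ∈ I)
    (hN : IsOpen N) (hIN : I ⊆ N) (hIdeal : ∀ s : S, ∀ a ∈ I, s * a ∈ I ∧ a * s ∈ I)
    (hhom : ∀ u v : B, f (u * v) = f u * f v)
    (hsep : ∀ a : S, Continuous (a * ·) ∧ Continuous (· * a)) (p q : B) :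
    {u ∈ f ⁻¹' N | p * u * q ∉ f ⁻¹' N}.Finite := by
  by_contra hinf
  obtain ⟨z, hz, hzI⟩ := hacc _ hinf (sep_subset _ _)
  have hcont : Continuous (fun x => f p * x * f q) := (hsep (f q)).2.comp (hsep (f p)).1
  have hzN : f p * z * f q ∈ N := hIN ((hIdeal _ _ (hIdeal _ _ hzI).1).2)
  obtain ⟨_, hxN, u, hu, rfl⟩ := mem_closure_iff.1 hz _ (hN.preimage hcont) hzN
  exact hu.2 (by simpa only [mem_preimage, hhom] using hxN)

end AccumulatingInIdeal

instance unitInterval.uncountable : Uncountable unitInterval :=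
  Cardinal.aleph0_lt_mk_iff.1 (Cardinal.mk_Icc_real zero_lt_one ▸ Cardinal.aleph0_lt_continuum)

namespace Bsg

def horiz (t : ℝ) (ht : 0 ≤ t) : Bsg := ⟨(t, 0), ht, le_rfl⟩

def vert (t : ℝ) (ht : 0 ≤ t) : Bsg := ⟨(0, t), le_rfl, ht⟩

theorem mul_val (u v : Bsg) :
    (u * v).1 = (u.1.1 + v.1.1 - min u.1.2 v.1.1, u.1.2 + v.1.2 - min u.1.2 v.1.1) := rfl

theorem horiz_mul_mul_vert_val {t : ℝ} (ht : 0 ≤ t) (u : Bsg) :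
    (horiz t ht * u * vert t ht).1 = (u.1.1 + t, u.1.2 + t) := by
  rw [mul_val, mul_val]
  simp only [horiz, vert, min_eq_left u.2.1, zero_add, add_zero, sub_zero, min_eq_right u.2.2]
  rw [add_comm t]

theorem vert_mul_val_of_fst_le {s : ℝ} (hs : 0 ≤ s) {w : Bsg} (hw : w.1.1 ≤ s) :
    (vert s hs * w).1 = (0, s + w.1.2 - w.1.1) := by
  rw [mul_val]
  simp only [vert, min_eq_right hw]
  ring_nf

theorem finite_of_finite_mul_fiber_of_finite_escape (T : Set Bsg)
    (hfiber : ∀ v c : Bsg, {u ∈ T | v * u = c}.Finite)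
    (hescape : ∀ p q : Bsg, {u ∈ T | p * u * q ∉ T}.Finite) : T.Finite := by
  rw [← not_infinite]
  intro hT
  let e := hT.natEmbedding
  let d (t : unitInterval) (u : Bsg) : Bsg := horiz t t.2.1 * u * vert t t.2.1
  have hd (t : unitInterval) (u : Bsg) : (d t u).1 = (u.1.1 + t, u.1.2 + t) :=
    horiz_mul_mul_vert_val _ u
  have hstay (u : Bsg) : {t | d t u ∈ T}.Finite := by
    have hs : 0 ≤ u.1.1 + 1 := by linarith [u.2.1]
    have hc : 0 ≤ u.1.2 + 1 := by linarith [u.2.2]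
    refine Finite.of_finite_image (f := (d · u)) ((hfiber (vert _ hs) (vert _ hc)).subset ?_) ?_
    · rintro _ ⟨t, ht, rfl⟩
      refine ⟨ht, Subtype.ext ?_⟩
      rw [vert_mul_val_of_fst_le hs (by rw [hd]; linarith [t.2.2]), hd]
      simp only [vert, Prod.mk.injEq, true_and]
      ring
    · intro t _ t' _ htt'
      have := congrArg (fun w : Bsg => w.1.1) htt'
      simp only [hd, add_right_inj] at this
      exact Subtype.ext this
  obtain ⟨t, ht⟩ : ∃ t, t ∉ ⋃ k, {t | d t (e k) ∈ T} := by
    by_contra! h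
    exact not_countable_univ
      ((countable_iUnion fun k => (hstay _).countable).mono fun t _ => h t)
  refine (hescape (horiz t t.2.1) (vert t t.2.1)).not_infinite
    ((infinite_range_of_injective (Subtype.val_injective.comp e.injective)).mono ?_)
  rintro _ ⟨k, rfl⟩
  exact ⟨(e k).2, fun h => ht (mem_iUnion.2 ⟨k, h⟩)⟩

end Bsg

theorem stmt19_general {S : Type*} [TopologicalSpace S] [T2Space S] [LocallyCompactSpace S] [Semigroup S]
    (hsep : ∀ a : S, Continuous (fun x : S => a * x) ∧ Continuous (fun x : S => x * a))
    (I : Set S) (hIcomp : IsCompact I)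
    (hIdeal : ∀ s : S, ∀ a ∈ I, s * a ∈ I ∧ a * s ∈ I)
    (f : Bsg → S) (hinj : Function.Injective f)
    (hhom : ∀ u v : Bsg, f (u * v) = f u * f v)
    (hrange : Set.range f = Iᶜ)
    (hiso : ∀ s : S, s ∉ I → IsOpen ({s} : Set S)) :
    IsOpen I := by
  obtain ⟨K, hK, hIK⟩ := exists_compact_superset hIcomp
  have hfI (u : Bsg) : f u ∉ I := hrange.subset (mem_range_self u)
  have hacc (G : Set Bsg) (hG : G.Infinite) (hGK : G ⊆ f ⁻¹' interior K) :
      ∃ z ∈ closure (f '' G), z ∈ I := by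
    simpa only [mem_compl_iff, not_not] using
      (hG.image hinj.injOn).exists_mem_closure_notMem_of_isOpen_singleton (D := Iᶜ) hK
        ((image_subset_iff.2 hGK).trans interior_subset) hiso
  refine isOpen_of_finite_preimage isOpen_interior hIK hrange ?_
  exact Bsg.finite_of_finite_mul_fiber_of_finite_escape _
    (fun v => finite_mul_fiber hacc hIdeal hhom hfI (hsep (f v)).1)
    (finite_mul_mul_escape hacc isOpen_interior hIK hIdeal hhom hsep)

/-- if every point of `S \ I` is isolated, then the compact ideal `I` is an
open subset of `S`. -/
theorem stmt19 {S : Type*} [TopologicalSpace S] [T2Space S] [LocallyCompactSpace S] [Semigroup S]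
    (hsep : ∀ a : S, Continuous (fun x : S => a * x) ∧ Continuous (fun x : S => x * a))
    (I : Set S) (hne : I.Nonempty) (hIcomp : IsCompact I)
    (hIdeal : ∀ s : S, ∀ a ∈ I, s * a ∈ I ∧ a * s ∈ I)
    (f : Bsg → S) (hinj : Function.Injective f)
    (hhom : ∀ u v : Bsg, f (u * v) = f u * f v)
    (hrange : Set.range f = Iᶜ)
    (hiso : ∀ s : S, s ∉ I → IsOpen ({s} : Set S)) :
    IsOpen I :=
  stmt19_general hsep I hIcomp hIdeal f hinj hhom hrange hiso
end
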